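/- arXiv:1812.02974 — 2 statements merged into one kernel-verified Lean document; each statement's English description precedes it below -/
import Mathlib

section
/- Let n ≥ 1 and let s, y ∈ ℝⁿ satisfy sᵀy > 0. Let τ₁, τ₂ ∈ [0,1] with τ₁ ≤ τ₂, and let α₁, α₂ ∈ [αBB2, αBB1] satisfy ψ(τ₁, α₁) = 0 and ψ(τ₂, α₂) = 0. Then α₁ ≤ α₂; i.e., the root of ψ(τ, ·) = 0 in [αBB2, αBB1] is monotone (nondecreasing) in τ. -/
/-!
Write `ψ(τ, α) = (1 - τ) A α²(α - c) + τ B (α - d)` with `A = yᵀy`, `B = sᵀy`, `c = αBB2`,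
`d = αBB1`. On `[c, d]` the cubic term is nonnegative and the linear one nonpositive, so `ψ` is
antitone in `τ` there; and for each `τ ∈ [0, 1]` it is strictly increasing in `α` on `[c, ∞)`.
Hence `ψ(τ₂, α₁) ≤ ψ(τ₁, α₁) = 0 = ψ(τ₂, α₂)` forces `α₁ ≤ α₂`.
-/

open Set

lemma sum_mul_self_pos_of_sum_mul_pos {ι : Type*} [Fintype ι] {s y : ι → ℝ}
    (h : 0 < ∑ i, s i * y i) : 0 < ∑ i, y i * y i := by
  refine (Finset.sum_nonneg fun i _ => mul_self_nonneg (y i)).lt_of_ne' fun hy => h.ne' ?_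
  have hy0 := (Finset.sum_mul_self_eq_zero_iff _ y).mp hy
  simp [hy0]

def bbBlend (A B c d τ α : ℝ) : ℝ :=
  (1 - τ) * A * (α ^ 3 - α ^ 2 * c) + τ * B * (α - d)

section
variable {A B c d : ℝ}

lemma strictMonoOn_cubic_sub (hc : 0 ≤ c) :
    StrictMonoOn (fun α : ℝ => α ^ 3 - α ^ 2 * c) (Ici c) := by
  intro a (ha : c ≤ a) b (hb : c ≤ b) hab
  show a ^ 3 - a ^ 2 * c < b ^ 3 - b ^ 2 * c
  have hfactor : (b ^ 3 - b ^ 2 * c) - (a ^ 3 - a ^ 2 * c)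
      = (b - a) * (b * (b - c) + a * (a - c) + a * b) := by ring
  have hpos : 0 < b * (b - c) + a * (a - c) + a * b := by
    have : 0 < b * (b - c) := mul_pos (by linarith) (by linarith)
    nlinarith [mul_nonneg (hc.trans ha) (sub_nonneg.2 ha), mul_nonneg (hc.trans ha) (hc.trans hb)]
  have := mul_pos (sub_pos.2 hab) hpos
  linarith

lemma bbBlend_strictMonoOn (hA : 0 < A) (hB : 0 < B) (hc : 0 ≤ c) {τ : ℝ} (hτ : τ ∈ Icc 0 1) :
    StrictMonoOn (bbBlend A B c d τ) (Ici c) := by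
  intro a ha b hb hab
  have hcubic : 0 < (b ^ 3 - b ^ 2 * c) - (a ^ 3 - a ^ 2 * c) :=
    sub_pos.2 (strictMonoOn_cubic_sub hc ha hb hab)
  have hlin := sub_pos.2 hab
  simp only [bbBlend]
  -- the weights `(1 - τ) A` and `τ B` are nonnegative and cannot vanish together
  rcases hτ.2.lt_or_eq with hτ1 | rfl
  · have := mul_pos (mul_pos (sub_pos.2 hτ1) hA) hcubic
    nlinarith [mul_nonneg (mul_nonneg hτ.1 hB.le) hlin.le]
  · nlinarith [mul_pos hB hlin]

lemma bbBlend_antitone (hA : 0 ≤ A) (hB : 0 ≤ B) {α : ℝ} (hα : α ∈ Icc c d) :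
    Antitone fun τ => bbBlend A B c d τ α := by
  intro τ τ' hττ'
  have hcubic : 0 ≤ α ^ 3 - α ^ 2 * c := by
    nlinarith [mul_nonneg (sq_nonneg α) (sub_nonneg.2 hα.1)]
  have hlin : α - d ≤ 0 := sub_nonpos.2 hα.2
  simp only [bbBlend]
  nlinarith [mul_nonneg (sub_nonneg.2 hττ') (mul_nonneg hA hcubic),
    mul_nonneg (sub_nonneg.2 hττ') (mul_nonneg hB (neg_nonneg.2 hlin))]

end

theorem stmt_2_general (n : ℕ) (s y : Fin n → ℝ)
    (hsy : 0 < ∑ i, s i * y i)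
    (aBB1 aBB2 : ℝ)
    (h2 : aBB2 = (∑ i, s i * y i) / (∑ i, y i * y i))
    (ψ : ℝ → ℝ → ℝ)
    (hψ : ∀ τ α : ℝ, ψ τ α =
      (1 - τ) * (∑ i, y i * y i) * (α ^ 3 - α ^ 2 * aBB2)
        + τ * (∑ i, s i * y i) * (α - aBB1))
    (τ₁ τ₂ : ℝ) (hτ₂ : τ₂ ∈ Set.Icc (0 : ℝ) 1)
    (hττ : τ₁ ≤ τ₂)
    (α₁ α₂ : ℝ)
    (hα₁ : α₁ ∈ Set.Icc aBB2 aBB1) (hα₂ : α₂ ∈ Set.Icc aBB2 aBB1)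
    (hr₁ : ψ τ₁ α₁ = 0) (hr₂ : ψ τ₂ α₂ = 0) :
    α₁ ≤ α₂ := by
  have hA := sum_mul_self_pos_of_sum_mul_pos hsy
  have hc : 0 ≤ aBB2 := h2 ▸ div_nonneg hsy.le hA.le
  have hψ_eq : ψ = bbBlend (∑ i, y i * y i) (∑ i, s i * y i) aBB2 aBB1 := funext₂ hψ
  subst hψ_eq
  by_contra! h
  have hle : bbBlend _ _ aBB2 aBB1 τ₂ α₁ ≤ 0 :=
    (bbBlend_antitone hA.le hsy.le hα₁ hττ).trans hr₁.le
  have hlt := bbBlend_strictMonoOn (d := aBB1) hA hsy hc hτ₂ hα₂.1 (hα₂.1.trans h.le) h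
  linarith

theorem stmt_2 (n : ℕ) (hn : 1 ≤ n) (s y : Fin n → ℝ)
    (hsy : 0 < ∑ i, s i * y i)
    (aBB1 aBB2 : ℝ)
    (h1 : aBB1 = (∑ i, s i * s i) / (∑ i, s i * y i))
    (h2 : aBB2 = (∑ i, s i * y i) / (∑ i, y i * y i))
    (ψ : ℝ → ℝ → ℝ)
    (hψ : ∀ τ α : ℝ, ψ τ α =
      (1 - τ) * (∑ i, y i * y i) * (α ^ 3 - α ^ 2 * aBB2)
        + τ * (∑ i, s i * y i) * (α - aBB1))
    (τ₁ τ₂ : ℝ) (hτ₁ : τ₁ ∈ Set.Icc (0 : ℝ) 1) (hτ₂ : τ₂ ∈ Set.Icc (0 : ℝ) 1)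
    (hττ : τ₁ ≤ τ₂)
    (α₁ α₂ : ℝ)
    (hα₁ : α₁ ∈ Set.Icc aBB2 aBB1) (hα₂ : α₂ ∈ Set.Icc aBB2 aBB1)
    (hr₁ : ψ τ₁ α₁ = 0) (hr₂ : ψ τ₂ α₂ = 0) :
    α₁ ≤ α₂ :=
  stmt_2_general n s y hsy aBB1 aBB2 h2 ψ hψ τ₁ τ₂ hτ₂ hττ α₁ α₂ hα₁ hα₂ hr₁ hr₂
end

section
/- In the two-dimensional setting with γ_k ∈ (0,1) for all k ≥ 2, set c₁ = 2 log λ, M_k = log q_k, θ = (1 + √7 i)/2 ∈ ℂ, and ξ₂ = M₂ + (θ − 1)M₁. If |ξ₂| > 8 log λ, then for every k ≥ 2, ‖g_{k+5}‖ ≤ λ(λ − 1)⁵·exp(−(√2 − 1)²·2^{k/2}·c₁ + 2c₁)·‖g_k‖, where ‖g_j‖ = √((g_j⁽¹⁾)² + (g_j⁽²⁾)²). -/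
/-!
Put `M j = log q j`. One step of the iteration gives
`M (j+1) - M j + 2 M (j-1) = 2 log (q (j-1) (1 - α j) / (λ α j - 1)) ∈ [0, c₁]`, so
`ξ j = M j + (θ - 1) M (j-1)` satisfies `ξ (j+1) = θ ξ j + ε j` with `|ε j| ≤ c₁` and `|θ| = √2`.
Once `|ξ 2| > 4 c₁` this forces `|ξ k| ≥ 2 √2 (D + c₁)` with `D = (√2 - 1)² 2^(k/2) c₁`; since
`|ξ k|² = (M k - M (k-1) / 2)² + 7/4 M (k-1)²`, both the positive parts and the negative parts of
`M (k-1), …, M (k+2)` must then add up to more than `D`. A step multiplies `|g⁽¹⁾|` by at most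
`λ (λ - 1) exp (-(M (j-1))⁺)` and `|g⁽²⁾|` by at most `λ (λ - 1) exp (-(M (j-1))⁻)`, so five
steps shrink both components by the factor `(λ (λ - 1))⁵ e^(-D) = λ (λ - 1)⁵ e^(2 c₁ - D)`.
-/

open Real Finset

noncomputable def stepSize (lam γ Q : ℝ) : ℝ :=
  γ * (1 + Q) / (lam + Q) + (1 - γ) * (lam + Q) / (lam ^ 2 + Q)

section StepSize

variable {lam γ Q : ℝ}

lemma one_sub_stepSize_eq (hlam : 0 < lam) (hQ : 0 < Q) :
    1 - stepSize lam γ Q = (lam - 1) * (γ / (lam + Q) + lam * ((1 - γ) / (lam ^ 2 + Q))) := by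
  unfold stepSize
  field_simp
  ring

lemma lam_mul_stepSize_sub_one_eq (hlam : 0 < lam) (hQ : 0 < Q) :
    lam * stepSize lam γ Q - 1 = (lam - 1) * Q * (γ / (lam + Q) + (1 - γ) / (lam ^ 2 + Q)) := by
  unfold stepSize
  field_simp
  ring

lemma stepSize_weights_mem (hlam : 1 ≤ lam) (hγ : γ ∈ Set.Icc 0 1) (hQ : 0 < Q) :
    γ / (lam + Q) + (1 - γ) / (lam ^ 2 + Q) ∈ Set.Icc (1 / (lam ^ 2 + Q)) (1 / (lam + Q)) := by
  obtain ⟨hγ0, hγ1⟩ := hγ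
  have hle : lam + Q ≤ lam ^ 2 + Q := by nlinarith
  constructor
  · calc 1 / (lam ^ 2 + Q) = γ / (lam ^ 2 + Q) + (1 - γ) / (lam ^ 2 + Q) := by ring
      _ ≤ _ := by gcongr
  · calc _ ≤ γ / (lam + Q) + (1 - γ) / (lam + Q) := by gcongr
      _ = 1 / (lam + Q) := by ring

lemma lam_mul_stepSize_sub_one_pos (hlam : 1 < lam) (hγ : γ ∈ Set.Icc 0 1) (hQ : 0 < Q) :
    0 < lam * stepSize lam γ Q - 1 := by
  rw [lam_mul_stepSize_sub_one_eq (by linarith) hQ]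
  have := lt_of_lt_of_le (by positivity) (stepSize_weights_mem hlam.le hγ hQ).1
  have : 0 < lam - 1 := by linarith
  positivity

lemma one_sub_stepSize_pos (hlam : 1 < lam) (hγ : γ ∈ Set.Icc 0 1) (hQ : 0 < Q) :
    0 < 1 - stepSize lam γ Q := by
  rw [one_sub_stepSize_eq (by linarith) hQ]
  have hw := lt_of_lt_of_le (by positivity) (stepSize_weights_mem hlam.le hγ hQ).1
  have hv : 0 ≤ (1 - γ) / (lam ^ 2 + Q) := div_nonneg (sub_nonneg.2 hγ.2) (by positivity)
  have : 0 < lam - 1 := by linarith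
  have : 0 < γ / (lam + Q) + lam * ((1 - γ) / (lam ^ 2 + Q)) := by nlinarith
  positivity

lemma lam_mul_stepSize_sub_one_le (hlam : 1 < lam) (hγ : γ ∈ Set.Icc 0 1) (hQ : 0 < Q) :
    lam * stepSize lam γ Q - 1 ≤ (lam - 1) * (Q / (lam + Q)) := by
  rw [lam_mul_stepSize_sub_one_eq (by linarith) hQ, mul_assoc, ← mul_one_div Q]
  have : 0 < lam - 1 := by linarith
  gcongr
  exact (stepSize_weights_mem hlam.le hγ hQ).2

lemma mul_one_sub_stepSize_div_mem_Icc (hlam : 1 < lam) (hγ : γ ∈ Set.Icc 0 1) (hQ : 0 < Q) :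
    Q * ((1 - stepSize lam γ Q) / (lam * stepSize lam γ Q - 1)) ∈ Set.Icc 1 lam := by
  have hpos := lam_mul_stepSize_sub_one_pos hlam hγ hQ
  rw [← mul_div_assoc, Set.mem_Icc, le_div_iff₀ hpos, div_le_iff₀ hpos]
  rw [one_sub_stepSize_eq (by linarith) hQ, lam_mul_stepSize_sub_one_eq (by linarith) hQ]
  have hu : 0 ≤ γ / (lam + Q) := div_nonneg hγ.1 (by positivity)
  have hv : 0 ≤ (1 - γ) / (lam ^ 2 + Q) := div_nonneg (sub_nonneg.2 hγ.2) (by positivity)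
  have : 0 < lam - 1 := by linarith
  constructor <;>
    nlinarith [mul_nonneg (mul_nonneg this.le hQ.le) hu, mul_nonneg (mul_nonneg this.le hQ.le) hv]

lemma one_sub_stepSize_le (hlam : 1 < lam) (hγ : γ ∈ Set.Icc 0 1) (hQ : 0 < Q) :
    1 - stepSize lam γ Q ≤ (lam - 1) * (lam / (lam + Q)) := by
  rw [one_sub_stepSize_eq (by linarith) hQ]
  have hu : 0 ≤ γ / (lam + Q) := div_nonneg hγ.1 (by positivity)
  have hw := (stepSize_weights_mem hlam.le hγ hQ).2
  have : 0 < lam - 1 := by linarith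
  gcongr
  calc γ / (lam + Q) + lam * ((1 - γ) / (lam ^ 2 + Q))
      ≤ lam * (γ / (lam + Q) + (1 - γ) / (lam ^ 2 + Q)) := by nlinarith
    _ ≤ lam * (1 / (lam + Q)) := by gcongr
    _ = lam / (lam + Q) := by ring

end StepSize

lemma div_add_le_mul_exp_neg_posPart_log {lam Q : ℝ} (hlam : 1 ≤ lam) (hQ : 0 < Q) :
    lam / (lam + Q) ≤ lam * exp (-(log Q)⁺) := by
  rcases le_total Q 1 with h | h
  · rw [posPart_eq_zero.2 (log_nonpos hQ.le h), neg_zero, exp_zero, mul_one]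
    exact div_le_self (by linarith) (by linarith)
  · rw [posPart_eq_self.2 (log_nonneg h), exp_neg, exp_log hQ, ← div_eq_mul_inv]
    exact div_le_div_of_nonneg_left (by linarith) hQ (by linarith)

lemma div_add_le_exp_neg_negPart_log {lam Q : ℝ} (hlam : 1 ≤ lam) (hQ : 0 < Q) :
    Q / (lam + Q) ≤ exp (-(log Q)⁻) := by
  rcases le_total Q 1 with h | h
  · rw [negPart_eq_neg.2 (log_nonpos hQ.le h), neg_neg, exp_log hQ]
    exact div_le_self hQ.le (by linarith)
  · rw [negPart_eq_zero.2 (log_nonneg h), neg_zero, exp_zero]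
    exact (div_le_one (by linarith)).2 (by linarith)

lemma abs_le_pow_mul_exp_neg_sum {g x : ℕ → ℝ} {c : ℝ} {k : ℕ} (hc : 0 ≤ c)
    (h : ∀ i, |g (k + i + 1)| ≤ c * exp (-x i) * |g (k + i)|) (n : ℕ) :
    |g (k + n)| ≤ c ^ n * exp (-∑ i ∈ range n, x i) * |g k| := by
  induction n with
  | zero => simp
  | succ n ih =>
    calc |g (k + (n + 1))| ≤ c * exp (-x n) * |g (k + n)| := h n
      _ ≤ c * exp (-x n) * (c ^ n * exp (-∑ i ∈ range n, x i) * |g k|) := by gcongr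
      _ = c ^ (n + 1) * exp (-∑ i ∈ range (n + 1), x i) * |g k| := by
        rw [sum_range_succ, neg_add, exp_add]; ring

-- `(g1 k, g2 k)` is the gradient at the `k`-th iterate of gradient descent on
-- `(x₁² + λ x₂²) / 2` with step sizes `α k`.
structure IsGDTrajectory (lam : ℝ) (γ α g1 g2 q : ℕ → ℝ) : Prop where
  one_lt : 1 < lam
  γ_mem : ∀ k, 2 ≤ k → γ k ∈ Set.Icc 0 1
  q_eq : ∀ j, q j = g1 j ^ 2 / g2 j ^ 2
  α_eq : ∀ k, 2 ≤ k → α k = stepSize lam (γ k) (q (k - 1))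
  g1_succ : ∀ k, 2 ≤ k → g1 (k + 1) = (1 - α k) * g1 k
  g2_succ : ∀ k, 2 ≤ k → g2 (k + 1) = (1 - lam * α k) * g2 k
  g1_one : g1 1 ≠ 0
  g2_one : g2 1 ≠ 0
  g1_two : g1 2 ≠ 0
  g2_two : g2 2 ≠ 0

namespace IsGDTrajectory

variable {lam : ℝ} {γ α g1 g2 q : ℕ → ℝ} {k : ℕ}

lemma one_sub_α_pos (h : IsGDTrajectory lam γ α g1 g2 q) (hk : 2 ≤ k) (hq : 0 < q (k - 1)) :
    0 < 1 - α k := by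
  rw [h.α_eq k hk]
  exact one_sub_stepSize_pos h.one_lt (h.γ_mem k hk) hq

lemma lam_mul_α_sub_one_pos (h : IsGDTrajectory lam γ α g1 g2 q) (hk : 2 ≤ k)
    (hq : 0 < q (k - 1)) : 0 < lam * α k - 1 := by
  rw [h.α_eq k hk]
  exact lam_mul_stepSize_sub_one_pos h.one_lt (h.γ_mem k hk) hq

lemma ne_zero (h : IsGDTrajectory lam γ α g1 g2 q) (hk : 1 ≤ k) : g1 k ≠ 0 ∧ g2 k ≠ 0 := by
  suffices ∀ j, 1 ≤ j → (g1 j ≠ 0 ∧ g2 j ≠ 0) ∧ (g1 (j + 1) ≠ 0 ∧ g2 (j + 1) ≠ 0) from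
    (this k hk).1
  intro j hj
  induction j, hj using Nat.le_induction with
  | base => exact ⟨⟨h.g1_one, h.g2_one⟩, h.g1_two, h.g2_two⟩
  | succ j _ ih =>
    have hq : 0 < q (j + 1 - 1) := by
      rw [h.q_eq]
      have := ih.1.1; have := ih.1.2
      positivity
    refine ⟨ih.2, ?_, ?_⟩
    · rw [h.g1_succ (j + 1) (by omega)]
      exact mul_ne_zero (h.one_sub_α_pos (by omega) hq).ne' ih.2.1
    · rw [h.g2_succ (j + 1) (by omega)]
      exact mul_ne_zero (by linarith [h.lam_mul_α_sub_one_pos (by omega) hq]) ih.2.2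

lemma q_pos (h : IsGDTrajectory lam γ α g1 g2 q) (hk : 1 ≤ k) : 0 < q k := by
  rw [h.q_eq]
  have := (h.ne_zero hk).1; have := (h.ne_zero hk).2
  positivity

lemma abs_g1_succ_le (h : IsGDTrajectory lam γ α g1 g2 q) (hk : 2 ≤ k) :
    |g1 (k + 1)| ≤ (lam - 1) * lam * exp (-(log (q (k - 1)))⁺) * |g1 k| := by
  have hq := h.q_pos (k := k - 1) (by omega)
  have hlam := h.one_lt
  rw [h.g1_succ k hk, abs_mul, abs_of_pos (h.one_sub_α_pos hk hq), h.α_eq k hk]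
  gcongr
  calc 1 - stepSize lam (γ k) (q (k - 1)) ≤ (lam - 1) * (lam / (lam + q (k - 1))) :=
        one_sub_stepSize_le hlam (h.γ_mem k hk) hq
    _ ≤ (lam - 1) * (lam * exp (-(log (q (k - 1)))⁺)) := by
        gcongr
        exact div_add_le_mul_exp_neg_posPart_log hlam.le hq
    _ = (lam - 1) * lam * exp (-(log (q (k - 1)))⁺) := by ring

lemma abs_g2_succ_le (h : IsGDTrajectory lam γ α g1 g2 q) (hk : 2 ≤ k) :
    |g2 (k + 1)| ≤ (lam - 1) * lam * exp (-(log (q (k - 1)))⁻) * |g2 k| := by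
  have hq := h.q_pos (k := k - 1) (by omega)
  have hlam := h.one_lt
  rw [h.g2_succ k hk, abs_mul, abs_sub_comm, abs_of_pos (h.lam_mul_α_sub_one_pos hk hq),
    h.α_eq k hk]
  gcongr
  calc lam * stepSize lam (γ k) (q (k - 1)) - 1 ≤ (lam - 1) * (q (k - 1) / (lam + q (k - 1))) :=
        lam_mul_stepSize_sub_one_le hlam (h.γ_mem k hk) hq
    _ ≤ (lam - 1) * (lam * exp (-(log (q (k - 1)))⁻)) := by
        gcongr
        exact (div_add_le_exp_neg_negPart_log hlam.le hq).trans
          (le_mul_of_one_le_left (exp_nonneg _) hlam.le)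
    _ = (lam - 1) * lam * exp (-(log (q (k - 1)))⁻) := by ring

lemma abs_log_q_succ_le (h : IsGDTrajectory lam γ α g1 g2 q) (hk : 2 ≤ k) :
    |log (q (k + 1)) - log (q k) + 2 * log (q (k - 1))| ≤ 2 * log lam := by
  have hQ := h.q_pos (k := k - 1) (by omega)
  have hq := h.q_pos (k := k) (by omega)
  have hu := h.one_sub_α_pos hk hQ
  have hv := h.lam_mul_α_sub_one_pos hk hQ
  have hg2 := (h.ne_zero (k := k) (by omega)).2
  have hq_succ : q (k + 1) = q k * ((1 - α k) / (lam * α k - 1)) ^ 2 := by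
    rw [h.q_eq, h.q_eq, h.g1_succ k hk, h.g2_succ k hk]
    have : 1 - lam * α k ≠ 0 := by linarith
    field_simp
    ring
  have hratio := mul_one_sub_stepSize_div_mem_Icc h.one_lt (h.γ_mem k hk) hQ
  rw [← h.α_eq k hk] at hratio
  have hlog : log (q (k + 1)) - log (q k) + 2 * log (q (k - 1)) =
      2 * log (q (k - 1) * ((1 - α k) / (lam * α k - 1))) := by
    rw [hq_succ, log_mul hq.ne' (by positivity), log_pow, log_mul hQ.ne' (by positivity)]
    push_cast
    ring
  rw [hlog, abs_le]
  have h0 := log_nonneg hratio.1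
  have h1 := log_le_log (by positivity) hratio.2
  constructor <;> linarith [log_pos h.one_lt]

lemma abs_g1_add_le (h : IsGDTrajectory lam γ α g1 g2 q) (hk : 2 ≤ k) (n : ℕ) :
    |g1 (k + n)| ≤
      ((lam - 1) * lam) ^ n * exp (-∑ i ∈ range n, (log (q (k - 1 + i)))⁺) * |g1 k| := by
  refine abs_le_pow_mul_exp_neg_sum (by nlinarith [h.one_lt]) (fun i => ?_) n
  rw [show k - 1 + i = k + i - 1 by omega]
  exact h.abs_g1_succ_le (by omega)

lemma abs_g2_add_le (h : IsGDTrajectory lam γ α g1 g2 q) (hk : 2 ≤ k) (n : ℕ) :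
    |g2 (k + n)| ≤
      ((lam - 1) * lam) ^ n * exp (-∑ i ∈ range n, (log (q (k - 1 + i)))⁻) * |g2 k| := by
  refine abs_le_pow_mul_exp_neg_sum (by nlinarith [h.one_lt]) (fun i => ?_) n
  rw [show k - 1 + i = k + i - 1 by omega]
  exact h.abs_g2_succ_le (by omega)

end IsGDTrajectory

noncomputable def theta : ℂ := (1 + √7 * Complex.I) / 2

lemma theta_re : theta.re = 1 / 2 := by simp [theta]
lemma theta_im : theta.im = √7 / 2 := by simp [theta]

lemma theta_sq : theta ^ 2 = theta - 2 := by
  have h7 : ((√7 : ℝ) : ℂ) ^ 2 = 7 := by norm_cast; simp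
  rw [theta]
  linear_combination (Complex.I ^ 2 / 4) * h7 + (7 / 4 : ℂ) * Complex.I_sq

lemma norm_theta : ‖theta‖ = √2 := by
  rw [← Real.sqrt_sq (norm_nonneg _), Complex.sq_norm, Complex.normSq_apply, theta_re, theta_im]
  congr 1
  linear_combination Real.sq_sqrt (show (0 : ℝ) ≤ 7 by norm_num) / 4

noncomputable def xi (m : ℕ → ℝ) (j : ℕ) : ℂ := m j + (theta - 1) * m (j - 1)

lemma xi_succ (m : ℕ → ℝ) (j : ℕ) :
    xi m (j + 1) = theta * xi m j + ((m (j + 1) - m j + 2 * m (j - 1) : ℝ) : ℂ) := by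
  simp only [xi, add_tsub_cancel_right]
  push_cast
  linear_combination (-(m (j - 1) : ℂ)) * theta_sq

lemma norm_xi_sq (m : ℕ → ℝ) (j : ℕ) :
    ‖xi m j‖ ^ 2 = (m j - m (j - 1) / 2) ^ 2 + 7 / 4 * m (j - 1) ^ 2 := by
  rw [Complex.sq_norm, Complex.normSq_apply]
  simp only [xi, Complex.add_re, Complex.add_im, Complex.mul_re, Complex.mul_im, Complex.sub_re,
    Complex.sub_im, Complex.ofReal_re, Complex.ofReal_im, Complex.one_re, Complex.one_im, theta_re,
    theta_im]
  linear_combination m (j - 1) ^ 2 / 4 * Real.sq_sqrt (show (0 : ℝ) ≤ 7 by norm_num)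

lemma norm_xi_growth {m : ℕ → ℝ} {e : ℝ} (he : ∀ j, 2 ≤ j → |m (j + 1) - m j + 2 * m (j - 1)| ≤ e)
    (n : ℕ) :
    √2 ^ n * (‖xi m 2‖ - (√2 + 1) * e) ≤ ‖xi m (n + 2)‖ - (√2 + 1) * e := by
  refine geom_le (u := fun n => ‖xi m (n + 2)‖ - (√2 + 1) * e) (Real.sqrt_nonneg 2) n
    fun j _ => ?_
  have hstep : √2 * ‖xi m (j + 2)‖ ≤ ‖xi m (j + 2 + 1)‖ + e := by
    set ε : ℝ := m (j + 2 + 1) - m (j + 2) + 2 * m (j + 2 - 1)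
    calc √2 * ‖xi m (j + 2)‖ = ‖xi m (j + 2 + 1) - ε‖ := by
          rw [xi_succ m (j + 2), add_sub_cancel_right, norm_mul, norm_theta]
      _ ≤ ‖xi m (j + 2 + 1)‖ + ‖(ε : ℂ)‖ := norm_sub_le _ _
      _ = ‖xi m (j + 2 + 1)‖ + |ε| := by rw [Complex.norm_real, Real.norm_eq_abs]
      _ ≤ ‖xi m (j + 2 + 1)‖ + e := by gcongr; exact he _ (by omega)
  linear_combination hstep - e * Real.sq_sqrt (show (0 : ℝ) ≤ 2 by norm_num)

lemma rpow_half_eq_two_mul_sqrt_pow (n : ℕ) : (2 : ℝ) ^ (((n + 2 : ℕ) : ℝ) / 2) = 2 * √2 ^ n := by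
  rw [Real.sqrt_eq_rpow, ← Real.rpow_natCast, ← Real.rpow_mul (by norm_num),
    ← Real.rpow_one_add' (by norm_num) (by positivity)]
  push_cast
  ring_nf

lemma two_sqrt_two_mul_lt {t e x : ℝ} (ht : 1 ≤ t) (he : 0 ≤ e) (hx : 4 * e < x) :
    2 * √2 * ((√2 - 1) ^ 2 * (2 * t) * e + e) < t * (x - (√2 + 1) * e) + (√2 + 1) * e := by
  have h2 : √2 ^ 2 = 2 := Real.sq_sqrt (by norm_num)
  have hs : √2 < 10 / 7 := by nlinarith [Real.sqrt_nonneg 2]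
  have hlhs : 2 * √2 * ((√2 - 1) ^ 2 * (2 * t) * e + e) = (12 * √2 - 16) * t * e + 2 * √2 * e := by
    linear_combination (4 * t * e * √2 - 8 * t * e) * h2
  have hrhs : t * ((3 - √2) * e) < t * (x - (√2 + 1) * e) :=
    mul_lt_mul_of_pos_left (by linarith) (by linarith)
  have h₁ : 0 ≤ (19 - 13 * √2) * (t - 1) * e :=
    mul_nonneg (mul_nonneg (by linarith) (sub_nonneg.2 ht)) he
  have h₂ : 0 ≤ (20 - 14 * √2) * e := mul_nonneg (by linarith) he
  linarith

-- The left side is `‖xi m j‖ ^ 2` for `a = m (j-1)`, `b = m j` (`norm_xi_sq`).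
lemma sq_sub_half_add_le_posPart {a b c d e : ℝ} (he : 0 ≤ e) (h₁ : -e ≤ c - b + 2 * a)
    (h₂ : -e ≤ d - c + 2 * b) :
    (b - a / 2) ^ 2 + 7 / 4 * a ^ 2 ≤ 8 * (a⁺ + b⁺ + c⁺ + d⁺ + e) ^ 2 := by
  set S := a⁺ + b⁺ + c⁺ + d⁺
  have := le_posPart a; have := le_posPart b; have := le_posPart c; have := le_posPart d
  have := posPart_nonneg a; have := posPart_nonneg b; have := posPart_nonneg c
  have := posPart_nonneg d
  have hu : |b - a / 2| ≤ 5 / 2 * S + 2 * e := abs_le.2 ⟨by linarith, by linarith⟩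
  have ha : |a| ≤ S + 3 / 2 * e := abs_le.2 ⟨by linarith, by linarith⟩
  have hS : 0 ≤ S := by positivity
  nlinarith [sq_le_sq' (abs_le.1 hu).1 (abs_le.1 hu).2, sq_le_sq' (abs_le.1 ha).1 (abs_le.1 ha).2]

lemma lt_sum_posPart_and_negPart {m : ℕ → ℝ} {e : ℝ} (he0 : 0 ≤ e)
    (he : ∀ j, 2 ≤ j → |m (j + 1) - m j + 2 * m (j - 1)| ≤ e) (hξ : 4 * e < ‖xi m 2‖)
    {k : ℕ} (hk : 2 ≤ k) :
    (√2 - 1) ^ 2 * 2 ^ ((k : ℝ) / 2) * e < ∑ i ∈ range 4, (m (k - 1 + i))⁺ ∧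
    (√2 - 1) ^ 2 * 2 ^ ((k : ℝ) / 2) * e < ∑ i ∈ range 4, (m (k - 1 + i))⁻ := by
  obtain ⟨n, rfl⟩ : ∃ n, k = n + 2 := ⟨k - 2, by omega⟩
  rw [rpow_half_eq_two_mul_sqrt_pow]
  set D := (√2 - 1) ^ 2 * (2 * √2 ^ n) * e
  have hlow : 2 * √2 * (D + e) < ‖xi m (n + 2)‖ :=
    (two_sqrt_two_mul_lt (one_le_pow₀ (one_le_sqrt.2 one_le_two)) he0 hξ).trans_le
      (by linarith [norm_xi_growth he n])
  have hξk : ‖xi m (n + 2)‖ ^ 2 = (m (n + 2) - m (n + 1) / 2) ^ 2 + 7 / 4 * m (n + 1) ^ 2 :=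
    norm_xi_sq m (n + 2)
  have hlt : ∀ S, 0 ≤ S → ‖xi m (n + 2)‖ ^ 2 ≤ 8 * (S + e) ^ 2 → D < S := by
    intro S hS h
    by_contra! hSD
    have h8 : (2 * √2 * (D + e)) ^ 2 = 8 * (D + e) ^ 2 := by
      rw [mul_pow, mul_pow, Real.sq_sqrt (by norm_num)]; ring
    have := pow_lt_pow_left₀ hlow (by positivity) two_ne_zero
    have : (S + e) ^ 2 ≤ (D + e) ^ 2 := by gcongr
    linarith
  have hε₁ : |m (n + 3) - m (n + 2) + 2 * m (n + 1)| ≤ e := he (n + 2) (by omega)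
  have hε₂ : |m (n + 4) - m (n + 3) + 2 * m (n + 2)| ≤ e := he (n + 3) (by omega)
  simp only [sum_range_succ, sum_range_zero, zero_add]
  show D < (m (n + 1))⁺ + (m (n + 2))⁺ + (m (n + 3))⁺ + (m (n + 4))⁺ ∧
    D < (m (n + 1))⁻ + (m (n + 2))⁻ + (m (n + 3))⁻ + (m (n + 4))⁻
  constructor
  · exact hlt _ (by positivity)
      (hξk.trans_le (sq_sub_half_add_le_posPart he0 (abs_le.1 hε₁).1 (abs_le.1 hε₂).1))
  · have := sq_sub_half_add_le_posPart (a := -m (n + 1)) (b := -m (n + 2)) (c := -m (n + 3))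
      (d := -m (n + 4)) he0 (by linarith [(abs_le.1 hε₁).2]) (by linarith [(abs_le.1 hε₂).2])
    simp only [posPart_neg] at this
    exact hlt _ (by positivity) (hξk.trans_le (by convert this using 1; ring))

lemma sqrt_sq_add_sq_le_mul {x y x' y' C : ℝ} (hC : 0 ≤ C) (hx : |x'| ≤ C * |x|)
    (hy : |y'| ≤ C * |y|) : √(x' ^ 2 + y' ^ 2) ≤ C * √(x ^ 2 + y ^ 2) := by
  calc √(x' ^ 2 + y' ^ 2) = √(|x'| ^ 2 + |y'| ^ 2) := by rw [sq_abs, sq_abs]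
    _ ≤ √((C * |x|) ^ 2 + (C * |y|) ^ 2) := by gcongr
    _ = C * √(x ^ 2 + y ^ 2) := by
      rw [mul_pow, mul_pow, sq_abs, sq_abs, ← mul_add, sqrt_mul (sq_nonneg C), sqrt_sq hC]

theorem stmt_15 (lam : ℝ) (hlam : 1 < lam)
    (γ : ℕ → ℝ) (hγ : ∀ k, 2 ≤ k → γ k ∈ Set.Ioo (0 : ℝ) 1)
    (g1 g2 : ℕ → ℝ)
    (hg11 : g1 1 ≠ 0) (hg21 : g2 1 ≠ 0) (hg12 : g1 2 ≠ 0) (hg22 : g2 2 ≠ 0)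
    (q : ℕ → ℝ) (hq : ∀ j, q j = (g1 j) ^ 2 / (g2 j) ^ 2)
    (α : ℕ → ℝ)
    (hα : ∀ k, 2 ≤ k → α k =
      γ k * (1 + q (k - 1)) / (lam + q (k - 1)) +
        (1 - γ k) * (lam + q (k - 1)) / (lam ^ 2 + q (k - 1)))
    (hup1 : ∀ k, 2 ≤ k → g1 (k + 1) = (1 - α k) * g1 k)
    (hup2 : ∀ k, 2 ≤ k → g2 (k + 1) = (1 - lam * α k) * g2 k)
    (c1 : ℝ) (hc1 : c1 = 2 * Real.log lam)
    (M : ℕ → ℝ) (hM : ∀ j, M j = Real.log (q j))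
    (θ : ℂ) (hθ : θ = (1 + Real.sqrt 7 * Complex.I) / 2)
    (ξ2 : ℂ) (hξ2def : ξ2 = (M 2 : ℂ) + (θ - 1) * (M 1 : ℂ))
    (hξ2 : 8 * Real.log lam < ‖ξ2‖) :
    ∀ k, 2 ≤ k →
      Real.sqrt ((g1 (k + 5)) ^ 2 + (g2 (k + 5)) ^ 2) ≤
        lam * (lam - 1) ^ 5 *
          Real.exp (-((Real.sqrt 2 - 1) ^ 2 * (2 : ℝ) ^ ((k : ℝ) / 2) * c1) + 2 * c1) *
          Real.sqrt ((g1 k) ^ 2 + (g2 k) ^ 2) := by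
  intro k hk
  have htraj : IsGDTrajectory lam γ α g1 g2 q :=
    ⟨hlam, fun k hk => Set.Ioo_subset_Icc_self (hγ k hk), hq, hα, hup1, hup2,
      hg11, hg21, hg12, hg22⟩
  obtain rfl : M = fun j => log (q j) := funext hM
  obtain rfl : θ = theta := hθ
  subst hc1 hξ2def
  have hξ : 4 * (2 * log lam) < ‖xi (fun j => log (q j)) 2‖ :=
    (by ring : 4 * (2 * log lam) = 8 * log lam).trans_lt hξ2
  obtain ⟨hpos, hneg⟩ := lt_sum_posPart_and_negPart (mul_pos two_pos (log_pos hlam)).le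
    (fun j hj => htraj.abs_log_q_succ_le hj) hξ hk
  set D := (√2 - 1) ^ 2 * 2 ^ ((k : ℝ) / 2) * (2 * log lam)
  have hC : ((lam - 1) * lam) ^ 5 * exp (-D) =
      lam * (lam - 1) ^ 5 * exp (-D + 2 * (2 * log lam)) := by
    rw [exp_add, show 2 * (2 * log lam) = log (lam ^ 4) by rw [log_pow]; push_cast; ring,
      exp_log (by positivity)]
    ring
  rw [← hC]
  apply sqrt_sq_add_sq_le_mul (by positivity)
  · refine (htraj.abs_g1_add_le hk 5).trans ?_
    gcongr
    linarith [sum_range_succ (fun i => (log (q (k - 1 + i)))⁺) 4,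
      posPart_nonneg (log (q (k - 1 + 4)))]
  · refine (htraj.abs_g2_add_le hk 5).trans ?_
    gcongr
    linarith [sum_range_succ (fun i => (log (q (k - 1 + i)))⁻) 4,
      negPart_nonneg (log (q (k - 1 + 4)))]
end
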